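/- The word map induced by the word w(x,y) = [[x,[x,y]], [y,[x,y]]] (an element of the second derived subgroup F⁽²⁾ of the free group F₂) is surjective on PSL(2,ℂ): for every c ∈ PSL(2,ℂ) there exist g, h ∈ PSL(2,ℂ) with w(g,h) = c. -/

import Mathlib

/-- The word map on a group `G` induced by a word `w` in the free group on two
generators: substitute `g` for the first generator and `h` for the second. -/
def wordMap {G : Type*} [Group G] (w : FreeGroup (Fin 2)) (g h : G) : G :=
  FreeGroup.lift ![g, h] w

/-- The generator `x` of the free group on two generators. -/
def xGen : FreeGroup (Fin 2) := FreeGroup.of 0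

/-- The generator `y` of the free group on two generators. -/
def yGen : FreeGroup (Fin 2) := FreeGroup.of 1

open scoped commutatorElement in
/-- The word `w(x,y) = [[x,[x,y]], [y,[x,y]]]` in the free group on `x, y`. -/
def wF2 : FreeGroup (Fin 2) := ⁅⁅xGen, ⁅xGen, yGen⁆⁆, ⁅yGen, ⁅xGen, yGen⁆⁆⁆

open scoped commutatorElement

/-- The special linear group `SL(2,ℂ)`. -/
abbrev SL2C := Matrix.SpecialLinearGroup (Fin 2) ℂ

/-- The projective special linear group `PSL(2,ℂ) = SL(2,ℂ)/center`. -/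
abbrev PSL2C := SL2C ⧸ Subgroup.center SL2C

/-- build an element of SL2C from entries -/
def mk (a b c d : ℂ) (h : a * d - b * c = 1) : SL2C :=
  ⟨!![a, b; c, d], by rw [Matrix.det_fin_two_of]; linear_combination h⟩

lemma ext_mk {a b c d a' b' c' d' : ℂ} {h : a * d - b * c = 1} {h' : a' * d' - b' * c' = 1}
    (h1 : a = a') (h2 : b = b') (h3 : c = c') (h4 : d = d') :
    mk a b c d h = mk a' b' c' d' h' := by subst h1 h2 h3 h4; rfl

lemma mul_mk {a b c d e f g i : ℂ} (h : a * d - b * c = 1) (h' : e * i - f * g = 1) :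
    mk a b c d h * mk e f g i h' =
      mk (a*e + b*g) (a*f + b*i) (c*e + d*g) (c*f + d*i)
        (by linear_combination (e*i - f*g) * h + h') := by
  apply Subtype.ext
  show (!![a,b;c,d] : Matrix (Fin 2) (Fin 2) ℂ) * !![e,f;g,i] = _
  rw [Matrix.mul_fin_two]; rfl

lemma one_mk : (1 : SL2C) = mk 1 0 0 1 (by ring) := by
  apply Subtype.ext
  show (1 : Matrix (Fin 2) (Fin 2) ℂ) = _
  rw [Matrix.one_fin_two]; rfl

lemma inv_mk {a b c d : ℂ} (h : a * d - b * c = 1) :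
    (mk a b c d h)⁻¹ = mk d (-b) (-c) a (by linear_combination h) := by
  apply inv_eq_of_mul_eq_one_right
  rw [mul_mk, one_mk]
  exact ext_mk (by linear_combination h) (by ring) (by ring) (by linear_combination h)

lemma entry00 {a b c d : ℂ} (h : a * d - b * c = 1) : (mk a b c d h).1 0 0 = a := rfl
lemma entry11 {a b c d : ℂ} (h : a * d - b * c = 1) : (mk a b c d h).1 1 1 = d := rfl

lemma eq_mk (A : SL2C) :
    A = mk (A.1 0 0) (A.1 0 1) (A.1 1 0) (A.1 1 1)
      (by rw [← Matrix.det_fin_two]; exact A.2) := by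
  apply Subtype.ext
  show A.1 = !![A.1 0 0, A.1 0 1; A.1 1 0, A.1 1 1]
  exact Matrix.eta_fin_two A.1
lemma wordMap_hom {G H : Type*} [Group G] [Group H] (φ : G →* H) (w : FreeGroup (Fin 2))
    (g h : G) : wordMap w (φ g) (φ h) = φ (wordMap w g h) := by
  unfold wordMap
  rw [← MonoidHom.comp_apply]
  apply DFunLike.congr_fun
  apply FreeGroup.ext_hom
  intro i
  fin_cases i <;> simp

lemma wordMap_wF2 {G : Type*} [Group G] (g h : G) :
    wordMap wF2 g h = ⁅⁅g, ⁅g, h⁆⁆, ⁅h, ⁅g, h⁆⁆⁆ := by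
  simp [wordMap, wF2, xGen, yGen, map_commutatorElement]

lemma wordMap_conj {G : Type*} [Group G] (w : FreeGroup (Fin 2)) (k g h : G) :
    wordMap w (k * g * k⁻¹) (k * h * k⁻¹) = k * wordMap w g h * k⁻¹ := by
  simpa using wordMap_hom (MulAut.conj k).toMonoidHom w g h
-- The one-parameter family realizing all traces
def gm (t : ℂ) : SL2C := mk (-2) (-(2*t) - 1) (-1) (-t - 1) (by ring)
def hm : SL2C := mk (-1) 1 0 (-1) (by norm_num)

def Wmat (t : ℂ) : SL2C :=
  mk (20*t^4 + 180*t^3 + 519*t^2 + 527*t + 169)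
     (-(30*t^4) - 265*t^3 - 756*t^2 - 767*t - 246)
     (10*t^4 + 95*t^3 + 287*t^2 + 292*t + 90)
     (-(15*t^4) - 140*t^3 - 418*t^2 - 425*t - 131) (by ring)

lemma word_gm (t : ℂ) : wordMap wF2 (gm t) hm = Wmat t := by
  have hu : ⁅gm t, hm⁆ = mk 3 (-1) 1 0 (by ring) := by
    rw [commutatorElement_def]
    unfold gm hm
    rw [inv_mk, inv_mk, mul_mk, mul_mk, mul_mk]
    exact ext_mk (by ring) (by ring) (by ring) (by ring)
  have hA : ⁅gm t, mk 3 (-1) 1 0 (by ring)⁆ =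
      mk (4*t^2 + 16*t + 11) (-(10*t^2) - 39*t - 24) (2*t^2 + 9*t + 6)
         (-(5*t^2) - 22*t - 13) (by ring) := by
    rw [commutatorElement_def]
    unfold gm
    rw [inv_mk, inv_mk, mul_mk, mul_mk, mul_mk]
    exact ext_mk (by ring) (by ring) (by ring) (by ring)
  have hB : ⁅hm, mk 3 (-1) 1 0 (by ring)⁆ = mk (-1) 5 (-1) 4 (by ring) := by
    rw [commutatorElement_def]
    unfold hm
    rw [inv_mk, inv_mk, mul_mk, mul_mk, mul_mk]
    exact ext_mk (by ring) (by ring) (by ring) (by ring)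
  rw [wordMap_wF2, hu, hA, hB, commutatorElement_def]
  rw [inv_mk, inv_mk, mul_mk, mul_mk, mul_mk]
  exact ext_mk (by ring) (by ring) (by ring) (by ring)

-- the parabolic instance
def g₀ : SL2C := mk (-1) (-1) 0 (-1) (by norm_num)
def h₀ : SL2C := mk 1 1 (-1) 0 (by norm_num)

lemma word_par : wordMap wF2 g₀ h₀ = mk (-1) (-6) 0 (-1) (by norm_num) := by
  have hu : ⁅g₀, h₀⁆ = mk 1 1 1 2 (by norm_num) := by
    rw [commutatorElement_def]
    unfold g₀ h₀
    rw [inv_mk, inv_mk, mul_mk, mul_mk, mul_mk]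
    exact ext_mk (by norm_num) (by norm_num) (by norm_num) (by norm_num)
  have hA : ⁅g₀, mk 1 1 1 2 (by norm_num)⁆ = mk 3 (-1) 1 0 (by norm_num) := by
    rw [commutatorElement_def]
    unfold g₀
    rw [inv_mk, inv_mk, mul_mk, mul_mk, mul_mk]
    exact ext_mk (by norm_num) (by norm_num) (by norm_num) (by norm_num)
  have hB : ⁅h₀, mk 1 1 1 2 (by norm_num)⁆ = mk 5 (-2) (-2) 1 (by norm_num) := by
    rw [commutatorElement_def]
    unfold h₀
    rw [inv_mk, inv_mk, mul_mk, mul_mk, mul_mk]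
    exact ext_mk (by norm_num) (by norm_num) (by norm_num) (by norm_num)
  rw [wordMap_wF2, hu, hA, hB, commutatorElement_def]
  rw [inv_mk, inv_mk, mul_mk, mul_mk, mul_mk]
  exact ext_mk (by norm_num) (by norm_num) (by norm_num) (by norm_num)

/-- every element of SL2C is conjugate to an upper triangular matrix,
preserving the trace -/
lemma triangularize (A : SL2C) :
    ∃ (P : SL2C) (a b d : ℂ) (had : a * d = 1),
      P * A * P⁻¹ = mk a b 0 d (by rw [mul_zero, sub_zero]; exact had) ∧
      a + d = A.1 0 0 + A.1 1 1 := by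
  set p := A.1 0 0 with hp
  set q := A.1 0 1 with hq
  set r := A.1 1 0 with hr
  set s := A.1 1 1 with hs
  have hdet : p * s - q * r = 1 := by
    rw [← Matrix.det_fin_two]; exact A.2
  have hAmk : A = mk p q r s hdet := eq_mk A
  by_cases hr0 : r = 0
  · refine ⟨1, p, q, s, by linear_combination hdet + q * hr0, ?_, rfl⟩
    rw [one_mul, inv_one, mul_one, hAmk]
    exact ext_mk rfl rfl hr0 rfl
  · obtain ⟨u, hu⟩ := IsAlgClosed.exists_pow_nat_eq ((p + s)^2 - 4) (n := 2) (by norm_num)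
    set l := (p + s + u) / 2 with hl
    set d := (p + s - u) / 2 with hd
    have hld : l * d = 1 := by
      rw [hl, hd]
      field_simp
      linear_combination -hu
    refine ⟨mk 0 r⁻¹ (-r) (l - s) (by field_simp; ring), l, -r⁻¹, d, hld, ?_, by rw [hl, hd]; ring⟩
    rw [mul_inv_eq_iff_eq_mul, hAmk, mul_mk, mul_mk]
    have hdl : d = p + s - l := by rw [hd, hl]; ring
    have h1 : l * (p + s - l) = 1 := by rw [← hdl]; exact hld
    refine ext_mk (by ring) (by ring) (by rw [hdl]; ring) ?_
    linear_combination -h1 + hdet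

/-- a triangular matrix with distinct diagonal entries is conjugate to a diagonal one -/
lemma kill_b {a b d : ℂ} (had : a * d = 1) (hne : a ≠ d) :
    ∃ Q : SL2C, Q * mk a b 0 d (by rw [mul_zero, sub_zero]; exact had) * Q⁻¹ =
      mk a 0 0 d (by rw [mul_zero, sub_zero]; exact had) := by
  have hsub : a - d ≠ 0 := sub_ne_zero.mpr hne
  refine ⟨mk 1 (b / (a - d)) 0 1 (by ring), ?_⟩
  rw [mul_inv_eq_iff_eq_mul, mul_mk, mul_mk]
  refine ext_mk (by ring) ?_ (by ring) (by ring)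
  field_simp
  ring

/-- diagonalization with prescribed trace, for trace² ≠ 4 -/
lemma diagonalize (A : SL2C) (hτ : (A.1 0 0 + A.1 1 1)^2 ≠ 4) :
    ∃ (P : SL2C) (a d : ℂ) (had : a * d = 1),
      P * A * P⁻¹ = mk a 0 0 d (by rw [mul_zero, sub_zero]; exact had) ∧
      a + d = A.1 0 0 + A.1 1 1 := by
  obtain ⟨P, a, b, d, had, hPA, htr⟩ := triangularize A
  have hne : a ≠ d := by
    intro h
    apply hτ
    rw [← htr]
    linear_combination (a - d) * h + 4 * had
  obtain ⟨Q, hQ⟩ := kill_b (b := b) had hne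
  refine ⟨Q * P, a, d, had, ?_, htr⟩
  rw [show Q * P * A * (Q * P)⁻¹ = Q * (P * A * P⁻¹) * Q⁻¹ from by group, hPA, hQ]

/-- two SL2C matrices with the same trace are conjugate when trace² ≠ 4 -/
lemma conj_of_trace_eq (A B : SL2C) (h : A.1 0 0 + A.1 1 1 = B.1 0 0 + B.1 1 1)
    (hτ : (A.1 0 0 + A.1 1 1)^2 ≠ 4) :
    ∃ R : SL2C, R * A * R⁻¹ = B := by
  obtain ⟨P, a, d, had, hPA, htrA⟩ := diagonalize A hτ
  obtain ⟨Q, a', d', had', hQB, htrB⟩ := diagonalize B (by rw [← h]; exact hτ)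
  have hsum : a' + d' = a + d := by rw [htrA, htrB, h]
  have hdd : d' = a + d - a' := by linear_combination hsum
  have hcases : (a' - a) * (a' - d) = 0 := by
    have : a' * d' = a * d := by rw [had, had']
    linear_combination -this + a' * hdd
  have key : mk a' 0 0 d' (by rw [mul_zero, sub_zero]; exact had') =
      mk a 0 0 d (by rw [mul_zero, sub_zero]; exact had) ∨
      ∃ J : SL2C, mk a' 0 0 d' (by rw [mul_zero, sub_zero]; exact had') =
        J * mk a 0 0 d (by rw [mul_zero, sub_zero]; exact had) * J⁻¹ := by
    rcases mul_eq_zero.mp hcases with h1 | h1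
    · left
      have ha : a' = a := by linear_combination h1
      exact ext_mk ha rfl rfl (by rw [hdd, ha]; ring)
    · right
      have ha : a' = d := by linear_combination h1
      have hd : d' = a := by rw [hdd, ha]; ring
      refine ⟨mk 0 1 (-1) 0 (by ring), ?_⟩
      symm
      rw [mul_inv_eq_iff_eq_mul, mul_mk, mul_mk]
      exact ext_mk (by ring) (by rw [ha]; ring) (by rw [hd]; ring) (by ring)
  rcases key with hk | ⟨J, hk⟩
  · refine ⟨Q⁻¹ * P, ?_⟩
    rw [show Q⁻¹ * P * A * (Q⁻¹ * P)⁻¹ = Q⁻¹ * (P * A * P⁻¹) * Q from by group, hPA, ← hk, ← hQB]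
    group
  · refine ⟨Q⁻¹ * J * P, ?_⟩
    rw [show Q⁻¹ * J * P * A * (Q⁻¹ * J * P)⁻¹ = Q⁻¹ * (J * (P * A * P⁻¹) * J⁻¹) * Q from by group,
      hPA, ← hk, ← hQB]
    group

def zc : SL2C := mk (-1) 0 0 (-1) (by norm_num)

lemma zc_center : zc ∈ Subgroup.center SL2C := by
  rw [Subgroup.mem_center_iff]
  intro A
  rw [eq_mk A, zc, mul_mk, mul_mk]
  exact ext_mk (by ring) (by ring) (by ring) (by ring)

lemma quartic_root (τ : ℂ) : ∃ t : ℂ, 5*t^4 + 40*t^3 + 101*t^2 + 102*t + 38 = τ := by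
  have hdeg : (Polynomial.C (5:ℂ) * Polynomial.X^4 + Polynomial.C 40 * Polynomial.X^3 +
      Polynomial.C 101 * Polynomial.X^2 + Polynomial.C 102 * Polynomial.X +
      Polynomial.C (38 - τ)).degree = 4 := by
    compute_degree!
  obtain ⟨t, ht⟩ := Complex.exists_root (by rw [hdeg]; norm_num)
  refine ⟨t, ?_⟩
  have h2 := ht
  simp only [Polynomial.IsRoot, Polynomial.eval_add, Polynomial.eval_mul, Polynomial.eval_pow,
    Polynomial.eval_C, Polynomial.eval_X] at h2
  linear_combination h2

theorem second_derived_word_surjective_on_PSL2C (c : PSL2C) :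
    ∃ g h : PSL2C, wordMap wF2 g h = c := by
  set φ := QuotientGroup.mk' (Subgroup.center SL2C) with hφ
  obtain ⟨C, rfl⟩ := QuotientGroup.mk'_surjective (Subgroup.center SL2C) c
  by_cases hτ : (C.1 0 0 + C.1 1 1)^2 = 4
  · -- exceptional case: trace² = 4
    obtain ⟨P, a, b, d, had, hP, htr⟩ := triangularize C
    have hsq : (a - d)^2 = 0 := by
      rw [← htr] at hτ
      linear_combination hτ - 4 * had
    have hda : d = a := by
      have := pow_eq_zero_iff (n := 2) (by norm_num) |>.mp hsq
      linear_combination -this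
    have ha2 : a * a = 1 := by rw [← hda] at had ⊢; exact hda ▸ had
    have haa : (a - 1) * (a + 1) = 0 := by linear_combination ha2
    have hC : C = P⁻¹ * mk a b 0 d (by rw [mul_zero, sub_zero]; exact had) * P := by
      rw [← hP]; group
    by_cases hb : b = 0
    · -- central case
      refine ⟨1, 1, ?_⟩
      have h1 : wordMap wF2 (1 : PSL2C) 1 = 1 := by
        rw [wordMap_wF2]; simp
      rw [h1]
      symm
      have hTz : mk a b 0 d (by rw [mul_zero, sub_zero]; exact had) ∈ Subgroup.center SL2C := by
        rcases mul_eq_zero.mp haa with h1' | h1'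
        · have ha1 : a = 1 := by linear_combination h1'
          have : mk a b 0 d (by rw [mul_zero, sub_zero]; exact had) = 1 := by
            rw [one_mk]; exact ext_mk ha1 hb rfl (by rw [hda, ha1])
          rw [this]; exact Subgroup.one_mem _
        · have ha1 : a = -1 := by linear_combination h1'
          have : mk a b 0 d (by rw [mul_zero, sub_zero]; exact had) = zc := by
            rw [zc]; exact ext_mk ha1 hb rfl (by rw [hda, ha1])
          rw [this]; exact zc_center
      show φ C = 1
      have h2 : φ (mk a b 0 d (by rw [mul_zero, sub_zero]; exact had)) = 1 := by
        rw [hφ, QuotientGroup.mk'_apply, QuotientGroup.eq_one_iff]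
        exact hTz
      rw [hC, map_mul, map_mul, h2, map_inv]
      group
    · -- parabolic case
      have hT : ∃ (z : SL2C) (_ : z ∈ Subgroup.center SL2C) (b'' : ℂ) (_ : b'' ≠ 0),
          mk a b 0 d (by rw [mul_zero, sub_zero]; exact had) =
            z * mk (-1) b'' 0 (-1) (by ring) := by
        rcases mul_eq_zero.mp haa with h1' | h1'
        · have ha1 : a = 1 := by linear_combination h1'
          refine ⟨zc, zc_center, -b, neg_ne_zero.mpr hb, ?_⟩
          rw [zc, mul_mk]
          exact ext_mk (by rw [ha1]; ring) (by ring) (by ring) (by rw [hda, ha1]; ring)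
        · have ha1 : a = -1 := by linear_combination h1'
          refine ⟨1, Subgroup.one_mem _, b, hb, ?_⟩
          rw [one_mk, mul_mk]
          exact ext_mk (by rw [ha1]; ring) (by ring) (by ring) (by rw [hda, ha1]; ring)
      obtain ⟨z, hz, b'', hb'', hTeq⟩ := hT
      obtain ⟨u, hu⟩ := IsAlgClosed.exists_pow_nat_eq (-6 / b'') (n := 2) (by norm_num)
      have hu0 : u ≠ 0 := by
        intro h0
        apply hb''
        have h6 : (-6 : ℂ) / b'' = 0 := by rw [← hu, h0]; ring
        rcases div_eq_zero_iff.mp h6 with h | h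
        · norm_num at h
        · exact h
      have hub : u^2 * b'' = -6 := by
        rw [hu]; exact div_mul_cancel₀ _ hb''
      set Q : SL2C := mk u 0 0 u⁻¹ (by field_simp; ring) with hQdef
      have hQ : Q * mk (-1) b'' 0 (-1) (by ring) * Q⁻¹ = mk (-1) (-6) 0 (-1) (by norm_num) := by
        rw [mul_inv_eq_iff_eq_mul, hQdef, mul_mk, mul_mk]
        refine ext_mk (by ring) ?_ (by ring) (by ring)
        rw [show (-6:ℂ) = u^2*b'' from hub.symm]
        field_simp
        ring
      have hmid : mk (-1) b'' 0 (-1) (by ring) = Q⁻¹ * wordMap wF2 g₀ h₀ * Q := by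
        rw [word_par, ← hQ]; group
      -- assemble
      set k : PSL2C := (φ (Q * P))⁻¹ with hk
      refine ⟨k * φ g₀ * k⁻¹, k * φ h₀ * k⁻¹, ?_⟩
      rw [wordMap_conj, wordMap_hom]
      show _ = φ C
      rw [hC, hTeq, hmid, hk]
      have hz1 : φ z = 1 := by
        rw [hφ, QuotientGroup.mk'_apply, QuotientGroup.eq_one_iff]
        exact hz
      simp only [map_mul, map_inv, hz1]
      group
  · -- generic case: trace² ≠ 4
    obtain ⟨t, ht⟩ := quartic_root (C.1 0 0 + C.1 1 1)
    have htrW : (Wmat t).1 0 0 + (Wmat t).1 1 1 = C.1 0 0 + C.1 1 1 := by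
      show (20*t^4 + 180*t^3 + 519*t^2 + 527*t + 169) +
        (-(15*t^4) - 140*t^3 - 418*t^2 - 425*t - 131) = _
      linear_combination ht
    obtain ⟨R, hR⟩ := conj_of_trace_eq (Wmat t) C htrW (by rw [htrW]; exact hτ)
    refine ⟨φ R * φ (gm t) * (φ R)⁻¹, φ R * φ hm * (φ R)⁻¹, ?_⟩
    rw [wordMap_conj, wordMap_hom, word_gm]
    show φ R * φ (Wmat t) * (φ R)⁻¹ = φ C
    rw [← hR]
    simp only [map_mul, map_inv]
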